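/- arXiv:2104.11819 — 3 statements merged into one kernel-verified Lean document; each statement's English description precedes it below -/
import Mathlib

section
/- The Legendre polynomial L^n, shifted to [0,1] and normalized by L^n(1) = 1, has Bernstein coefficients Π(L^n)_i = (-1)^{n+i} C(n,i); that is, L^n(x) = ∑_{i=0}^n (-1)^{n+i} C(n,i) B^n_i(x). -/
open Polynomial

/-- The shifted Legendre polynomial on `[0,1]`, normalized so that `L^n(1) = 1`,
via the Rodrigues formula `L^n(x) = (1/n!) dⁿ/dxⁿ (x² - x)ⁿ`. -/
noncomputable def shiftedLegendre (n : ℕ) : ℝ[X] :=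
  C ((n.factorial : ℝ)⁻¹) * derivative^[n] ((X ^ 2 - X) ^ n)

/-! Writing `(X² - X)ⁿ = Xⁿ (X - 1)ⁿ`, Leibniz's rule gives
`dⁿ/dxⁿ (X² - X)ⁿ = ∑ₖ (n choose k) · (n!/k!) Xᵏ · (n!/(n-k)!) (X - 1)ⁿ⁻ᵏ
  = n! ∑ₖ (n choose k)² Xᵏ (X - 1)ⁿ⁻ᵏ`,
and `(n choose k) Xᵏ (X - 1)ⁿ⁻ᵏ = (-1)ⁿ⁻ᵏ Bⁿₖ`. -/

open Finset Nat

theorem Nat.descFactorial_sub_mul_descFactorial (n k : ℕ) :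
    n.descFactorial (n - k) * n.descFactorial k = n ! * n.choose k := by
  rcases le_or_gt k n with hk | hk
  · rw [descFactorial_eq_factorial_mul_choose, descFactorial_eq_factorial_mul_choose,
      choose_symm hk, ← choose_mul_factorial_mul_factorial hk]
    ring
  · simp [descFactorial_eq_zero_iff_lt.mpr hk, choose_eq_zero_of_lt hk]

section

variable {R : Type*} [CommRing R]

theorem Polynomial.X_sub_one_pow_eq_neg_one_pow_mul (m : ℕ) :
    ((X : R[X]) - 1) ^ m = C ((-1 : R) ^ m) * (1 - X) ^ m := by
  rw [← neg_sub, neg_pow, map_pow, map_neg, C_1]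

theorem Polynomial.iterate_derivative_X_sq_sub_X_pow (n : ℕ) :
    derivative^[n] (((X : R[X]) ^ 2 - X) ^ n) =
      (n ! : R[X]) * ∑ i ∈ range (n + 1),
        C ((-1 : R) ^ (n + i) * (n.choose i : R)) * bernsteinPolynomial R n i := by
  have hfactor : ((X : R[X]) ^ 2 - X) ^ n = X ^ n * (X - C 1) ^ n := by
    rw [← mul_pow, C_1]; ring
  rw [hfactor, iterate_derivative_mul, mul_sum]
  refine sum_congr rfl fun k hk => ?_
  have hkn : k ≤ n := Nat.lt_succ_iff.mp (mem_range.mp hk)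
  have hsign : (-1 : R) ^ (n + k) = (-1) ^ (n - k) := by
    rw [show n + k = n - k + 2 * k by omega, pow_add, pow_mul, neg_one_sq, one_pow, mul_one]
  have hcoef : (n.descFactorial (n - k) : R[X]) * n.descFactorial k = n ! * n.choose k := by
    rw [← Nat.cast_mul, descFactorial_sub_mul_descFactorial, Nat.cast_mul]
  rw [iterate_derivative_X_pow_eq_smul, iterate_derivative_X_sub_pow, C_1,
    X_sub_one_pow_eq_neg_one_pow_mul, Nat.sub_sub_self hkn, bernsteinPolynomial, hsign]
  simp only [nsmul_eq_mul, smul_eq_C_mul, map_natCast, map_mul]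
  linear_combination (n.choose k * C ((-1 : R) ^ (n - k)) * X ^ k * (1 - X) ^ (n - k)) * hcoef

end

theorem shiftedLegendre_bernstein_coeffs (n : ℕ) :
    _root_.shiftedLegendre n =
      ∑ i ∈ Finset.range (n + 1),
        C ((-1 : ℝ) ^ (n + i) * (n.choose i : ℝ)) * bernsteinPolynomial ℝ n i := by
  have hfac : (n ! : ℝ) ≠ 0 := Nat.cast_ne_zero.mpr n.factorial_ne_zero
  rw [_root_.shiftedLegendre, iterate_derivative_X_sq_sub_X_pow, ← mul_assoc, ← map_natCast C,
    ← C_mul, inv_mul_cancel₀ hfac, C_1, one_mul]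
end

section
/- For each 0 ≤ j ≤ n, the vector E^{j,n} Π(L^j) of degree-n Bernstein coefficients of the shifted Legendre polynomial L^j is an eigenvector of the Bernstein mass matrix M^n with eigenvalue λ^n_j = (n!)² / ((n+j+1)!(n-j)!). -/
noncomputable def Bern (n i : ℕ) (x : ℝ) : ℝ := (n.choose i : ℝ) * x ^ i * (1 - x) ^ (n - i)

noncomputable def Elev (m n i j : ℕ) : ℝ :=
  if j ≤ i then ((m.choose j : ℝ) * ((n - m).choose (i - j) : ℝ)) / (n.choose i : ℝ) else 0

noncomputable def Mass (n : ℕ) (i j : ℕ) : ℝ := ∫ x in (0:ℝ)..1, Bern n i x * Bern n j x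

/-- Degree-j Bernstein coefficients of the shifted Legendre polynomial `L^j`. -/
noncomputable def legendreCoeff (j i : ℕ) : ℝ := (-1 : ℝ) ^ (j + i) * (j.choose i : ℝ)

/-!
The degree elevation matrix maps the degree-`j` Bernstein basis to the degree-`n` one, so
`(M^n E^{j,n} Π(L^j))_i = ∫ B^n_i L^j`, which the beta integral turns into the alternating sum
`c ∑ₖ (-1)^k C(j,k) C(i+k,k) C(n-i+j-k,j-k)` with `c = (-1)^j n! j! / (n+j+1)!`. An identity
between alternating binomial sums rewrites this as `c ∑ₖ (-1)^k C(j,k) C(i,k) C(n-i,j-k)`, and by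
the symmetry `E^{j,n}_{ik} = C(i,k) C(n-i,j-k) / C(n,j)` of the elevation coefficients this is
`λ^n_j` times the `i`-th entry of `E^{j,n} Π(L^j)`.
-/

open Nat Finset

theorem Nat.choose_mul_choose_sub_comm (N a b : ℕ) :
    N.choose a * (N - a).choose b = N.choose b * (N - b).choose a := by
  have ha := Nat.choose_mul (n := N) (Nat.le_add_right a b)
  have hb := Nat.choose_mul (n := N) (Nat.le_add_left b a)
  rw [Nat.add_sub_cancel_left, Nat.choose_symm_add] at ha
  rw [Nat.add_sub_cancel] at hb
  rw [← ha, hb]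

/-- Both sides count the pairs `(I, J)` of subsets of an `n`-set with `|I| = i`, `|J| = j` and
`|I ∩ J| = k`. -/
theorem Nat.choose_mul_choose_mul_choose_comm {n i j k : ℕ} (hki : k ≤ i) (hkj : k ≤ j) :
    n.choose j * j.choose k * (n - j).choose (i - k)
      = n.choose i * i.choose k * (n - i).choose (j - k) := by
  rw [Nat.choose_mul hkj, Nat.choose_mul hki, mul_assoc, mul_assoc,
    show n - j = n - k - (j - k) by omega, show n - i = n - k - (i - k) by omega,
    Nat.choose_mul_choose_sub_comm]

theorem Nat.choose_mul_choose_mul_factorial_mul_factorial {n i j k : ℕ} (hi : i ≤ n)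
    (hk : k ≤ j) : n.choose i * j.choose k * (i + k)! * (n - i + (j - k))!
      = n ! * j ! * (i + k).choose k * (n - i + (j - k)).choose (j - k) := by
  rw [← Nat.choose_mul_factorial_mul_factorial hi, ← Nat.choose_mul_factorial_mul_factorial hk,
    ← Nat.add_choose_mul_factorial_mul_factorial i k,
    ← Nat.add_choose_mul_factorial_mul_factorial (n - i) (j - k)]
  ring

section AlternatingSum

open Polynomial

variable {R : Type*} [CommRing R]

theorem Polynomial.coeff_coeff_map_C_mul_C (a b : R[X]) (m l : ℕ) :
    ((a.map C * C b).coeff m).coeff l = a.coeff m * b.coeff l := by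
  rw [coeff_mul_C, coeff_map, coeff_C_mul]

theorem Polynomial.coeff_X_pow_mul_one_add_X_pow (k x : ℕ) :
    (X ^ k * (1 + X) ^ x : R[X]).coeff x = x.choose k := by
  rw [coeff_X_pow_mul', coeff_one_add_X_pow]
  split_ifs with hk
  · rw [Nat.choose_symm hk]
  · rw [Nat.choose_eq_zero_of_lt (not_le.mp hk), Nat.cast_zero]

/-- Both sides are the coefficient of `Y ^ x * Z ^ y` in `(1 + Y) ^ x (1 + Z) ^ y (Z - Y) ^ j`,
expanded along `Z - Y = -(1 + Y) + (1 + Z)` and along `Z - Y = -Y + Z`. -/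
theorem sum_neg_one_pow_mul_choose_mul_add_choose_mul_add_choose (j x y : ℕ) :
    ∑ k ∈ range (j + 1),
        (-1 : R) ^ k * j.choose k * (x + k).choose k * (y + (j - k)).choose (j - k)
      = ∑ k ∈ range (j + 1), (-1 : R) ^ k * j.choose k * x.choose k * y.choose (j - k) := by
  have hP₁ : ((1 + X : R[X]) ^ x).map C * C ((1 + X) ^ y) * (C X - X) ^ j
      = ∑ k ∈ range (j + 1), ((-1 : R) ^ k * j.choose k) •
          (((1 + X) ^ (x + k)).map C * C ((1 + X) ^ (y + (j - k)))) := by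
    rw [show (C X - X : R[X][X]) = -((1 + X : R[X]).map C) + C (1 + X) by simp; ring,
      add_pow _ _ j, mul_sum]
    refine sum_congr rfl fun k _ => ?_
    simp only [Algebra.smul_def, Polynomial.map_pow, map_mul, map_pow, map_neg, map_one,
      map_natCast]
    ring
  have hP₂ : ((1 + X : R[X]) ^ x).map C * C ((1 + X) ^ y) * (C X - X) ^ j
      = ∑ k ∈ range (j + 1), ((-1 : R) ^ k * j.choose k) •
          ((X ^ k * (1 + X) ^ x).map C * C (X ^ (j - k) * (1 + X) ^ y)) := by
    rw [sub_eq_neg_add, add_pow _ _ j, mul_sum]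
    refine sum_congr rfl fun k _ => ?_
    simp only [Algebra.smul_def, Polynomial.map_pow, Polynomial.map_mul, map_mul, map_pow,
      map_neg, map_one, map_natCast, Polynomial.map_X]
    ring
  have h := congrArg (fun p : R[X][X] => (p.coeff x).coeff y) (hP₁.symm.trans hP₂)
  simp only [finsetSum_coeff, coeff_smul, coeff_coeff_map_C_mul_C, coeff_one_add_X_pow,
    coeff_X_pow_mul_one_add_X_pow, smul_eq_mul, mul_assoc] at h ⊢
  rw [← h]
  refine sum_congr rfl fun k _ => ?_
  rw [Nat.choose_symm_add, Nat.choose_symm_add]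

end AlternatingSum

theorem integral_pow_mul_one_sub_pow (a b : ℕ) :
    ∫ x in (0:ℝ)..1, x ^ a * (1 - x) ^ b = (a ! * b ! / (a + b + 1)! : ℝ) := by
  have h := Complex.betaIntegral_eq_Gamma_mul_div (a + 1) (b + 1) (by simp; positivity)
    (by simp; positivity)
  simp only [Complex.betaIntegral, add_sub_cancel_right, Complex.cpow_natCast] at h
  rw [show (a + 1 + (b + 1) : ℂ) = ((a + b + 1 : ℕ) : ℂ) + 1 by push_cast; ring,
    Complex.Gamma_nat_eq_factorial, Complex.Gamma_nat_eq_factorial,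
    Complex.Gamma_nat_eq_factorial] at h
  apply Complex.ofReal_injective
  rw [← intervalIntegral.integral_ofReal]
  push_cast
  exact h

@[fun_prop]
theorem continuous_bern (n i : ℕ) : Continuous (Bern n i) := by
  unfold Bern
  fun_prop

theorem integral_bern_mul_bern {m p i k : ℕ} (hi : i ≤ m) (hk : k ≤ p) :
    ∫ x in (0:ℝ)..1, Bern m i x * Bern p k x
      = m.choose i * p.choose k * (i + k)! * (m - i + (p - k))! / (m + p + 1)! := by
  have h : ∀ x : ℝ, Bern m i x * Bern p k x
      = (m.choose i * p.choose k) * (x ^ (i + k) * (1 - x) ^ (m - i + (p - k))) := by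
    intro x
    simp only [Bern, pow_add]
    ring
  simp only [h, intervalIntegral.integral_const_mul, integral_pow_mul_one_sub_pow]
  rw [show i + k + (m - i + (p - k)) + 1 = m + p + 1 by omega]
  ring

theorem elev_mul_bern_add {j n k m : ℕ} (hjn : j ≤ n) (hkj : k ≤ j) (hm : m ≤ n - j)
    (x : ℝ) :
    Elev j n (k + m) k * Bern n (k + m) x
      = Bern j k x * (x ^ m * (1 - x) ^ (n - j - m) * (n - j).choose m) := by
  have hc : (n.choose (k + m) : ℝ) ≠ 0 := by
    exact_mod_cast (Nat.choose_pos (by omega)).ne'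
  rw [Elev, if_pos (Nat.le_add_right k m), Nat.add_sub_cancel_left, Bern, Bern,
    show n - (k + m) = j - k + (n - j - m) by omega, pow_add, pow_add]
  field_simp

theorem sum_elev_mul_bern {j n k : ℕ} (hjn : j ≤ n) (hkj : k ≤ j) (x : ℝ) :
    ∑ i ∈ range (n + 1), Elev j n i k * Bern n i x = Bern j k x := by
  have hzero : ∀ i ∈ range (n + 1), i ∉ Ico k (k + (n - j + 1)) →
      Elev j n i k * Bern n i x = 0 := by
    intro i _ hi
    rw [mem_Ico, not_and_or, not_le, not_lt] at hi
    rcases hi with hik | hik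
    · simp [Elev, hik.not_ge]
    · simp [Elev, Nat.choose_eq_zero_of_lt (show n - j < i - k by omega)]
  calc ∑ i ∈ range (n + 1), Elev j n i k * Bern n i x
      = ∑ m ∈ range (n - j + 1), Elev j n (k + m) k * Bern n (k + m) x := by
        rw [← sum_subset (fun i hi => by simp only [mem_Ico, mem_range] at hi ⊢; omega) hzero,
          sum_Ico_eq_sum_range, Nat.add_sub_cancel_left]
    _ = Bern j k x * (x + (1 - x)) ^ (n - j) := by
        rw [add_pow, mul_sum]
        exact sum_congr rfl fun m hm =>
          elev_mul_bern_add hjn hkj (Nat.lt_succ_iff.mp (mem_range.mp hm)) x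
    _ = Bern j k x := by simp

theorem sum_mass_mul_elev {n j : ℕ} (hjn : j ≤ n) (i : ℕ) {k : ℕ} (hkj : k ≤ j) :
    ∑ i' ∈ range (n + 1), Mass n i i' * Elev j n i' k
      = ∫ x in (0:ℝ)..1, Bern n i x * Bern j k x := by
  simp only [Mass, ← intervalIntegral.integral_mul_const]
  rw [← intervalIntegral.integral_finsetSum fun i' _ => (by fun_prop : Continuous
    fun x => Bern n i x * Bern n i' x * Elev j n i' k).intervalIntegrable _ _]
  simp only [mul_assoc, ← mul_sum]
  simp_rw [mul_comm (Bern n _ _) (Elev _ _ _ _), sum_elev_mul_bern hjn hkj]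

theorem elev_eq_choose_mul_choose_div {j n i k : ℕ} (hjn : j ≤ n) (hi : i ≤ n) (hkj : k ≤ j) :
    Elev j n i k = i.choose k * (n - i).choose (j - k) / n.choose j := by
  have hni : (n.choose i : ℝ) ≠ 0 := by exact_mod_cast (Nat.choose_pos hi).ne'
  have hnj : (n.choose j : ℝ) ≠ 0 := by exact_mod_cast (Nat.choose_pos hjn).ne'
  rw [Elev]
  split_ifs with hki
  · rw [div_eq_div_iff hni hnj]
    have h := Nat.choose_mul_choose_mul_choose_comm (n := n) hki hkj
    norm_cast
    linarith
  · rw [Nat.choose_eq_zero_of_lt (not_le.mp hki)]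
    simp

theorem sum_mass_mul_elev_mul_legendreCoeff {n j i k : ℕ} (hjn : j ≤ n) (hi : i ≤ n)
    (hkj : k ≤ j) : (∑ i' ∈ range (n + 1), Mass n i i' * Elev j n i' k) * legendreCoeff j k
      = (-1) ^ j * n ! * j ! / (n + j + 1)!
        * ((-1) ^ k * j.choose k * (i + k).choose k * (n - i + (j - k)).choose (j - k)) := by
  have h : (n.choose i * j.choose k * (i + k)! * (n - i + (j - k))! : ℝ)
      = n ! * j ! * (i + k).choose k * (n - i + (j - k)).choose (j - k) := by
    exact_mod_cast Nat.choose_mul_choose_mul_factorial_mul_factorial hi hkj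
  rw [sum_mass_mul_elev hjn i hkj, integral_bern_mul_bern hi hkj, h, legendreCoeff, pow_add]
  ring

theorem eigenvalue_mul_elev_mul_legendreCoeff {n j i k : ℕ} (hjn : j ≤ n) (hi : i ≤ n)
    (hkj : k ≤ j) :
    (n ! ^ 2 / ((n + j + 1)! * (n - j)!) : ℝ) * (Elev j n i k * legendreCoeff j k)
      = (-1) ^ j * n ! * j ! / (n + j + 1)!
        * ((-1) ^ k * j.choose k * i.choose k * (n - i).choose (j - k)) := by
  have h : (n.choose j * j ! * (n - j)! : ℝ) = n ! := by
    exact_mod_cast Nat.choose_mul_factorial_mul_factorial hjn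
  rw [elev_eq_choose_mul_choose_div hjn hi hkj, legendreCoeff, pow_add, ← h]
  field_simp

theorem mass_eigenvector (n j : ℕ) (hj : j ≤ n) (i : ℕ) (hi : i ≤ n) :
    (∑ i' ∈ Finset.range (n + 1),
        Mass n i i' * (∑ k ∈ Finset.range (j + 1), Elev j n i' k * legendreCoeff j k)) =
      ((n.factorial : ℝ) ^ 2 / (((n + j + 1).factorial : ℝ) * ((n - j).factorial : ℝ))) *
        ∑ k ∈ Finset.range (j + 1), Elev j n i k * legendreCoeff j k := by
  calc _ = ∑ k ∈ range (j + 1),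
          (∑ i' ∈ range (n + 1), Mass n i i' * Elev j n i' k) * legendreCoeff j k := by
        simp_rw [mul_sum, sum_mul, mul_assoc]
        exact sum_comm
    _ = (-1 : ℝ) ^ j * n ! * j ! / (n + j + 1)! * ∑ k ∈ range (j + 1),
          (-1 : ℝ) ^ k * j.choose k * (i + k).choose k * (n - i + (j - k)).choose (j - k) := by
        rw [mul_sum]
        exact sum_congr rfl fun k hk =>
          sum_mass_mul_elev_mul_legendreCoeff hj hi (mem_range_succ_iff.mp hk)
    _ = (-1 : ℝ) ^ j * n ! * j ! / (n + j + 1)! * ∑ k ∈ range (j + 1),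
          (-1 : ℝ) ^ k * j.choose k * i.choose k * (n - i).choose (j - k) := by
        rw [sum_neg_one_pow_mul_choose_mul_add_choose_mul_add_choose]
    _ = _ := by
        rw [mul_sum, mul_sum]
        exact sum_congr rfl fun k hk =>
          (eigenvalue_mul_elev_mul_legendreCoeff hj hi (mem_range_succ_iff.mp hk)).symm
end

section
/- For m ≤ n, the matrix (E^{m,n})^T E^{m,n} has eigenvectors E^{j,m} Π(L^j) (for 0 ≤ j ≤ m) with corresponding eigenvalues λ^m_j / λ^n_j, where λ^n_j = (n!)² / ((n+j+1)!(n-j)!). -/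
/-- Eigenvalue `λ^n_j` of the Bernstein mass matrix `M^n`. -/
noncomputable def massEig (n j : ℕ) : ℝ :=
  (n.factorial : ℝ) ^ 2 / (((n + j + 1).factorial : ℝ) * ((n - j).factorial : ℝ))

open Finset

noncomputable def intChoose (s : ℕ) (t : ℤ) : ℝ := if 0 ≤ t then (s.choose t.toNat : ℝ) else 0

theorem intChoose_of_neg {s : ℕ} {t : ℤ} (ht : t < 0) : intChoose s t = 0 := by
  simp [intChoose, not_le.mpr ht]

@[simp]
theorem intChoose_natCast (s k : ℕ) : intChoose s k = s.choose k := by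
  simp [intChoose]

theorem intChoose_zero_left (t : ℤ) : intChoose 0 t = if t = 0 then 1 else 0 := by
  rcases lt_or_ge t 0 with ht | ht
  · rw [intChoose_of_neg ht, if_neg ht.ne]
  · lift t to ℕ using ht
    rw [intChoose_natCast]
    cases t <;> simp [Nat.cast_add_one_ne_zero]

theorem intChoose_succ_left (s : ℕ) (t : ℤ) :
    intChoose (s + 1) t = intChoose s t + intChoose s (t - 1) := by
  rcases lt_or_ge t 0 with ht | ht
  · simp [intChoose_of_neg ht, intChoose_of_neg (show t - 1 < 0 by omega)]
  · lift t to ℕ using ht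
    cases t with
    | zero =>
      rw [intChoose_of_neg (by omega : ((0 : ℕ) : ℤ) - 1 < 0), intChoose_natCast, intChoose_natCast]
      simp
    | succ k =>
      rw [show ((k + 1 : ℕ) : ℤ) - 1 = k by push_cast; ring, intChoose_natCast, intChoose_natCast,
        intChoose_natCast, Nat.choose_succ_succ', Nat.cast_add, add_comm]

theorem add_one_mul_intChoose_add_one (s : ℕ) (t : ℤ) :
    ((t : ℝ) + 1) * intChoose s (t + 1) = ((s : ℝ) - t) * intChoose s t := by
  rcases lt_or_ge t (-1) with ht | ht
  · rw [intChoose_of_neg (by omega), intChoose_of_neg (by omega)]; ring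
  obtain rfl | ht := ht.eq_or_lt
  · norm_num [intChoose_of_neg]
  lift t to ℕ using (by omega)
  have key : ((s.choose (t + 1) * (t + 1) : ℕ) : ℝ) = (s.choose t * (s - t) : ℕ) :=
    congrArg _ (Nat.choose_succ_right_eq s t)
  simp only [← Nat.cast_add_one, intChoose_natCast, Int.cast_natCast]
  rcases le_or_gt t s with hts | hts
  · push_cast [Nat.cast_sub hts] at key ⊢
    linarith
  · rw [Nat.choose_eq_zero_of_lt hts, Nat.choose_eq_zero_of_lt (by omega)]
    simp

/-- `(-1) ^ j * C(j + S, l)` times the `l`-th entry of `E^{j,j+S} Π(L^j)`. -/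
noncomputable def legendreNum (S j : ℕ) (l : ℤ) : ℝ :=
  ∑ k ∈ range (j + 1), (-1 : ℝ) ^ k * (j.choose k : ℝ) ^ 2 * intChoose S (l - k)

theorem legendreNum_succ_left (S j : ℕ) (l : ℤ) :
    legendreNum (S + 1) j l = legendreNum S j l + legendreNum S j (l - 1) := by
  simp only [legendreNum, ← sum_add_distrib, intChoose_succ_left, sub_right_comm l 1, mul_add]

theorem legendreNum_zero_left (j : ℕ) (l : ℤ) :
    legendreNum 0 j l = (-1 : ℝ) ^ l * intChoose j l ^ 2 := by
  rcases lt_or_ge l 0 with hl | hl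
  · simp only [legendreNum, intChoose_zero_left, intChoose_of_neg hl, sub_eq_zero]
    simpa using sum_eq_zero fun k _ => if_neg (by omega)
  lift l to ℕ using hl
  simp only [legendreNum, intChoose_zero_left, sub_eq_zero, Nat.cast_inj, mul_ite, mul_one,
    mul_zero, sum_ite_eq, mem_range, intChoose_natCast, zpow_natCast]
  split_ifs with hlj
  · rfl
  · simp [Nat.choose_eq_zero_of_lt (show j < l by omega)]

theorem legendreNum_three_term (S j : ℕ) (i : ℤ) :
    ((S : ℝ) + j + 1 - i) ^ 2 * (legendreNum S j i + legendreNum S j (i - 1)) +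
      ((i : ℝ) + 1) ^ 2 * (legendreNum S j i + legendreNum S j (i + 1)) =
    ((S : ℝ) + 2 * j + 2) * ((S : ℝ) + 1) * legendreNum S j i := by
  induction S generalizing i with
  | zero =>
    simp only [legendreNum_zero_left, zpow_sub_one₀ (show (-1 : ℝ) ≠ 0 by norm_num),
      zpow_add_one₀ (show (-1 : ℝ) ≠ 0 by norm_num)]
    have below := add_one_mul_intChoose_add_one j (i - 1)
    have above := add_one_mul_intChoose_add_one j i
    rw [sub_add_cancel] at below
    push_cast at below above ⊢
    linear_combination (-1 : ℝ) ^ i *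
      ((i * intChoose j i + (j - i + 1) * intChoose j (i - 1)) * below -
        ((i + 1) * intChoose j (i + 1) + (j - i) * intChoose j i) * above)
  | succ S ih =>
    have h := ih (i - 1)
    simp only [legendreNum_succ_left, sub_add_cancel, add_sub_cancel_right] at h ⊢
    push_cast at h ih ⊢
    linear_combination ih i + h

noncomputable def elevLegendre (n j l : ℕ) : ℝ :=
  ∑ k ∈ range (j + 1), Elev j n l k * legendreCoeff j k

theorem elevLegendre_eq_legendreNum (n j l : ℕ) :
    elevLegendre n j l = (-1 : ℝ) ^ j * legendreNum (n - j) j l / (n.choose l : ℝ) := by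
  rw [elevLegendre, legendreNum, mul_sum, sum_div]
  refine sum_congr rfl fun k _ => ?_
  rcases le_or_gt k l with hkl | hkl
  · rw [Elev, if_pos hkl, legendreCoeff, ← Nat.cast_sub hkl, intChoose_natCast, pow_add]
    ring
  · rw [Elev, if_neg (not_le.mpr hkl), intChoose_of_neg (by omega)]
    ring

theorem Elev_self {m i : ℕ} (hi : i ≤ m) (l : ℕ) : Elev m m l i = if l = i then 1 else 0 := by
  have hchoose : (m.choose i : ℝ) ≠ 0 := Nat.cast_ne_zero.mpr (Nat.choose_pos hi).ne'
  unfold Elev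
  split_ifs with hil hli hli
  · subst hli; simp [hchoose]
  · simp [Nat.choose_eq_zero_of_lt (show 0 < l - i by omega)]
  · omega
  · rfl

theorem choose_succ_mul_succ_sub (n : ℕ) {i : ℕ} (hi : i ≤ n + 1) :
    ((n + 1).choose i : ℝ) * ((n : ℝ) + 1 - i) = ((n : ℝ) + 1) * n.choose i := by
  have key := congrArg (Nat.cast (R := ℝ)) (Nat.choose_mul_succ_eq n i)
  push_cast [Nat.cast_sub hi] at key
  linarith

theorem choose_succ_succ_mul_succ (n i : ℕ) :
    ((n + 1).choose (i + 1) : ℝ) * ((i : ℝ) + 1) = ((n : ℝ) + 1) * n.choose i := by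
  exact_mod_cast (Nat.add_one_mul_choose_eq n i).symm

theorem Elev_succ_self {n i : ℕ} (hi : i ≤ n + 1) :
    Elev n (n + 1) i i = ((n : ℝ) + 1 - i) / ((n : ℝ) + 1) := by
  have hchoose : ((n + 1).choose i : ℝ) ≠ 0 := Nat.cast_ne_zero.mpr (Nat.choose_pos hi).ne'
  rw [Elev, if_pos le_rfl, Nat.add_sub_cancel_left, Nat.sub_self, Nat.choose_zero_right,
    div_eq_div_iff hchoose (by positivity), Nat.cast_one, mul_one]
  linear_combination -choose_succ_mul_succ_sub n hi

theorem Elev_succ_add_one {n i : ℕ} (hi : i ≤ n) :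
    Elev n (n + 1) (i + 1) i = ((i : ℝ) + 1) / ((n : ℝ) + 1) := by
  have hchoose : ((n + 1).choose (i + 1) : ℝ) ≠ 0 :=
    Nat.cast_ne_zero.mpr (Nat.choose_pos (by omega)).ne'
  rw [Elev, if_pos (Nat.le_succ i), Nat.add_sub_cancel_left, Nat.add_sub_cancel_left,
    Nat.choose_one_right, div_eq_div_iff hchoose (by positivity), Nat.cast_one, mul_one]
  linear_combination -choose_succ_succ_mul_succ n i

theorem Elev_succ_eq_zero {n l i : ℕ} (h : l ≠ i) (h' : l ≠ i + 1) : Elev n (n + 1) l i = 0 := by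
  unfold Elev
  split_ifs with hil
  · simp [Nat.choose_eq_zero_of_lt (show 1 < l - i by omega)]
  · rfl

theorem Nat.sum_range_ite_choose_mul_choose {a b k l M : ℕ} (hkl : k ≤ l) (hM : a + k ≤ M) :
    ∑ i ∈ range (M + 1), (if k ≤ i ∧ i ≤ l then a.choose (i - k) * b.choose (l - i) else 0) =
      (a + b).choose (l - k) := by
  rw [Nat.add_choose_eq,
    Finset.Nat.sum_antidiagonal_eq_sum_range_succ (fun x y => a.choose x * b.choose y)]
  refine sum_bij_ne_zero (fun i _ _ => i - k) ?_ ?_ ?_ ?_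
  · intro i _ hi
    have := (ite_ne_right_iff.mp hi).1
    rw [mem_range]
    omega
  · intro i₁ _ hi₁ i₂ _ hi₂ h
    have := (ite_ne_right_iff.mp hi₁).1
    have := (ite_ne_right_iff.mp hi₂).1
    omega
  · intro t ht hne
    have hta : t ≤ a := by
      by_contra! h
      simp [Nat.choose_eq_zero_of_lt h] at hne
    rw [mem_range] at ht
    refine ⟨t + k, mem_range.mpr (by omega), ?_, by simp⟩
    rwa [if_pos (by omega), Nat.add_sub_cancel, show l - (t + k) = l - k - t by omega]
  · intro i _ hi
    have := (ite_ne_right_iff.mp hi).1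
    rw [if_pos this, show l - i = l - k - (i - k) by omega]

theorem Elev_mul_Elev (j m n l k : ℕ) {i : ℕ} (hi : i ≤ m) :
    Elev m n l i * Elev j m i k = (j.choose k : ℝ) *
      ((if k ≤ i ∧ i ≤ l then (m - j).choose (i - k) * (n - m).choose (l - i) else 0 : ℕ) : ℝ) /
        n.choose l := by
  have hchoose : (m.choose i : ℝ) ≠ 0 := Nat.cast_ne_zero.mpr (Nat.choose_pos hi).ne'
  unfold Elev
  split_ifs <;> first | omega | (simp; done) | (push_cast; field_simp)

theorem sum_Elev_mul_Elev {j m n : ℕ} (hjm : j ≤ m) (hmn : m ≤ n) (l : ℕ) {k : ℕ} (hk : k ≤ j) :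
    ∑ i ∈ range (m + 1), Elev m n l i * Elev j m i k = Elev j n l k := by
  rw [sum_congr rfl fun i hi => Elev_mul_Elev j m n l k (Nat.lt_succ_iff.mp (mem_range.mp hi)),
    ← sum_div, ← mul_sum, ← Nat.cast_sum]
  rcases le_or_gt k l with hkl | hkl
  · rw [Nat.sum_range_ite_choose_mul_choose hkl (by omega), Elev, if_pos hkl,
      show m - j + (n - m) = n - j by omega]
  · rw [sum_eq_zero fun i _ => if_neg (by omega), Elev, if_neg (by omega)]
    simp

theorem sum_Elev_mul_elevLegendre {j m n : ℕ} (hjm : j ≤ m) (hmn : m ≤ n) (l : ℕ) :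
    ∑ i ∈ range (m + 1), Elev m n l i * elevLegendre m j i = elevLegendre n j l := by
  simp only [elevLegendre, mul_sum, ← mul_assoc]
  rw [sum_comm]
  refine sum_congr rfl fun k hk => ?_
  rw [← sum_mul, sum_Elev_mul_Elev hjm hmn l (Nat.lt_succ_iff.mp (mem_range.mp hk))]

theorem massEig_pos (n j : ℕ) : 0 < massEig n j := by
  unfold massEig
  positivity

theorem massEig_div_massEig_succ {n j : ℕ} (hj : j ≤ n) :
    massEig n j / massEig (n + 1) j =
      ((n : ℝ) + j + 2) * ((n : ℝ) + 1 - j) / ((n : ℝ) + 1) ^ 2 := by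
  have hj' : (j : ℝ) < n + 1 := by exact_mod_cast Nat.lt_succ_of_le hj
  rw [massEig, massEig, show n + 1 + j + 1 = n + j + 1 + 1 by ring, Nat.sub_add_comm hj,
    Nat.factorial_succ (n + j + 1), Nat.factorial_succ (n - j), Nat.factorial_succ n]
  push_cast [Nat.cast_sub hj]
  field_simp [(by linarith : (n : ℝ) - j + 1 ≠ 0)]
  ring

theorem sum_Elev_succ_mul_elevLegendre {n j i : ℕ} (hj : j ≤ n) (hi : i ≤ n) :
    ∑ l ∈ range (n + 2), Elev n (n + 1) l i * elevLegendre (n + 1) j l =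
      (massEig n j / massEig (n + 1) j) * elevLegendre n j i := by
  have hsub : {i, i + 1} ⊆ range (n + 2) := by
    intro l hl
    simp only [mem_insert, mem_singleton] at hl
    rw [mem_range]
    omega
  rw [← sum_subset hsub fun l _ hl => by
      simp only [mem_insert, mem_singleton, not_or] at hl
      rw [Elev_succ_eq_zero hl.1 hl.2, zero_mul],
    sum_pair (by omega), Elev_succ_self (by omega), Elev_succ_add_one hi,
    massEig_div_massEig_succ hj, elevLegendre_eq_legendreNum, elevLegendre_eq_legendreNum,
    elevLegendre_eq_legendreNum, Nat.sub_add_comm hj, legendreNum_succ_left, legendreNum_succ_left]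
  have recurrence := legendreNum_three_term (n - j) j i
  have hi' : (n : ℝ) + 1 - i ≠ 0 := by
    have : (i : ℝ) ≤ n := by exact_mod_cast hi
    linarith
  have hchoose : (n.choose i : ℝ) ≠ 0 := Nat.cast_ne_zero.mpr (Nat.choose_pos hi).ne'
  rw [eq_div_of_mul_eq hi' (choose_succ_mul_succ_sub n (by omega)),
    eq_div_of_mul_eq (by positivity) (choose_succ_succ_mul_succ n i)]
  push_cast [Nat.cast_sub hj] at recurrence ⊢
  rw [add_sub_cancel_right]
  field_simp
  linear_combination recurrence

theorem sum_Elev_transpose_mul_elevLegendre {j m i : ℕ} (hj : j ≤ m) (hi : i ≤ m) {n : ℕ}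
    (hmn : m ≤ n) :
    ∑ l ∈ range (n + 1), Elev m n l i * elevLegendre n j l =
      (massEig m j / massEig n j) * elevLegendre m j i := by
  induction n, hmn using Nat.le_induction with
  | base =>
    simp only [Elev_self hi, ite_mul, one_mul, zero_mul, sum_ite_eq', mem_range,
      if_pos (Nat.lt_succ_of_le hi), div_self (massEig_pos m j).ne']
  | succ n hmn ih =>
    have hjn := hj.trans hmn
    calc ∑ l ∈ range (n + 2), Elev m (n + 1) l i * elevLegendre (n + 1) j l
        = ∑ l ∈ range (n + 2), ∑ i' ∈ range (n + 1),
            Elev m n i' i * (Elev n (n + 1) l i' * elevLegendre (n + 1) j l) := by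
          refine sum_congr rfl fun l _ => ?_
          rw [← sum_Elev_mul_Elev hmn n.le_succ l hi, sum_mul]
          exact sum_congr rfl fun _ _ => by ring
      _ = ∑ i' ∈ range (n + 1), Elev m n i' i *
            ((massEig n j / massEig (n + 1) j) * elevLegendre n j i') := by
          rw [sum_comm]
          refine sum_congr rfl fun i' hi' => ?_
          rw [← mul_sum, sum_Elev_succ_mul_elevLegendre hjn (Nat.lt_succ_iff.mp (mem_range.mp hi'))]
      _ = (massEig m j / massEig (n + 1) j) * elevLegendre m j i := by
          simp only [mul_left_comm _ (massEig n j / _), ← mul_sum, ih]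
          field_simp [(massEig_pos n j).ne']

theorem ETE_eigenvector (m n : ℕ) (hmn : m ≤ n) (j : ℕ) (hj : j ≤ m) (i : ℕ) (hi : i ≤ m) :
    (∑ i' ∈ Finset.range (m + 1),
        (∑ l ∈ Finset.range (n + 1), Elev m n l i * Elev m n l i') *
          (∑ k ∈ Finset.range (j + 1), Elev j m i' k * legendreCoeff j k)) =
      (massEig m j / massEig n j) *
        ∑ k ∈ Finset.range (j + 1), Elev j m i k * legendreCoeff j k := by
  change ∑ i' ∈ range (m + 1), (∑ l ∈ range (n + 1), Elev m n l i * Elev m n l i') *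
      elevLegendre m j i' = (massEig m j / massEig n j) * elevLegendre m j i
  calc _ = ∑ l ∈ range (n + 1), Elev m n l i *
          ∑ i' ∈ range (m + 1), Elev m n l i' * elevLegendre m j i' := by
        simp only [sum_mul, mul_sum, mul_assoc]
        exact sum_comm
    _ = ∑ l ∈ range (n + 1), Elev m n l i * elevLegendre n j l := by
        simp only [sum_Elev_mul_elevLegendre hj hmn]
    _ = _ := sum_Elev_transpose_mul_elevLegendre hj hi hmn
end
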